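/- arXiv:math/9804126 — 6 statements merged into one kernel-verified Lean document; each statement's English description precedes it below -/
import Mathlib

section
/- ζ(3) = (5/2) · Σ_{n=1}^{∞} (-1)^{n-1} / (binom(2n, n) · n³). -/
/-!
Put `F i j = (-1)^i i!² j! / (2i + j + 3)!` and let `S` be the sum of Apéry's series.
For fixed `i`, `∑ⱼ F i j` is a telescoping series of factorial quotients, equal to half the
`i`-th term of `S`. On the other hand `(i + j + 2)³ F i j = Q (i+j+1) i - Q (i+j+1) (i+1)`
(a WZ pair), so the sum of `F` over the antidiagonal `i + j = n` telescopes to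
`1/(n+2)³ - 2 ×` the `(n+1)`-st term of `S`. Summing the absolutely convergent double series
in both ways gives `S / 2 = ζ(3) - 2 S`.
-/

open Finset Filter Topology
open scoped Nat

theorem HasSum.sum_antidiagonal {α A : Type*} [AddCommMonoid α] [TopologicalSpace α]
    [ContinuousAdd α] [RegularSpace α] [AddMonoid A] [HasAntidiagonal A]
    {f : A × A → α} {a : α} (hf : HasSum f a) :
    HasSum (fun n ↦ ∑ p ∈ antidiagonal n, f p) a :=
  (HasAntidiagonal.sigmaAntidiagonalEquivProd.hasSum_iff.mpr hf).sigma fun n ↦ by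
    rw [← sum_coe_sort]
    exact hasSum_fintype _

theorem Real.hasSum_sub_succ_of_tendsto {f : ℕ → ℝ} {l : ℝ} (hf : ∀ n, f (n + 1) ≤ f n)
    (hl : Tendsto f atTop (𝓝 l)) : HasSum (fun n ↦ f n - f (n + 1)) (f 0 - l) := by
  rw [hasSum_iff_tendsto_nat_of_nonneg fun n ↦ sub_nonneg.2 (hf n)]
  simpa only [sum_range_sub'] using tendsto_const_nhds.sub hl

theorem hasSum_factorial_div_factorial_add (k : ℕ) :
    HasSum (fun j : ℕ ↦ (j ! : ℝ) / (j + k + 2)!) (1 / ((k + 1) * (k + 1)!)) := by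
  set e : ℕ → ℝ := fun j ↦ (j ! : ℝ) / (j + k + 1)!
  have hstep : ∀ j, e j - e (j + 1) = (k + 1) * ((j ! : ℝ) / (j + k + 2)!) := by
    intro j
    simp only [e, show j + 1 + k + 1 = j + k + 2 by ring, Nat.factorial_succ j,
      Nat.factorial_succ (j + k + 1)]
    push_cast
    field_simp
    ring
  have hlim : Tendsto e atTop (𝓝 0) := by
    refine squeeze_zero (fun j ↦ by positivity) (fun j ↦ ?_)
      tendsto_one_div_add_atTop_nhds_zero_nat
    calc e j ≤ (j ! : ℝ) / (j + 1)! :=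
          div_le_div_of_nonneg_left (by positivity) (by positivity)
            (by exact_mod_cast Nat.factorial_le (by omega))
      _ = 1 / (j + 1) := by
          rw [Nat.factorial_succ]; push_cast; field_simp
  have hterm :
      (fun j : ℕ ↦ (j ! : ℝ) / (j + k + 2)!) = fun j ↦ (e j - e (j + 1)) / (k + 1) := by
    funext j
    rw [hstep]
    field_simp
  have he0 : e 0 = 1 / (k + 1)! := by simp [e]
  have hval : (1 : ℝ) / ((k + 1) * (k + 1)!) = (e 0 - 0) / (k + 1) := by
    rw [he0, sub_zero, div_div, mul_comm]
  rw [hterm, hval]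
  refine (Real.hasSum_sub_succ_of_tendsto (fun j ↦ ?_) hlim).div_const _
  rw [← sub_nonneg, hstep]
  positivity

namespace Apery

noncomputable def seriesTerm (n : ℕ) : ℝ :=
  (-1 : ℝ) ^ n / ((Nat.choose (2 * (n + 1)) (n + 1) : ℝ) * ((n : ℝ) + 1) ^ 3)

noncomputable def doubleTerm (i j : ℕ) : ℝ :=
  (-1) ^ i * ((i ! : ℝ) ^ 2 * j !) / (j + 2 * i + 3)!

/-- The truncated subtraction `N - j` is harmless: only `j ≤ N` is ever used. -/
noncomputable def certificate (N j : ℕ) : ℝ :=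
  (-1) ^ j * (N + 1) * ((j ! : ℝ) ^ 2 * (N - j)!) / (N + j + 1)!

theorem seriesTerm_eq_factorial (n : ℕ) :
    seriesTerm n = (-1) ^ n * (n ! : ℝ) ^ 2 / ((n + 1) * (2 * n + 2)!) := by
  rw [seriesTerm, Nat.cast_choose ℝ (by omega : n + 1 ≤ 2 * (n + 1)),
    show 2 * (n + 1) - (n + 1) = n + 1 by omega, show 2 * (n + 1) = 2 * n + 2 by ring,
    Nat.factorial_succ n]
  push_cast
  field_simp

theorem abs_seriesTerm_le (n : ℕ) : |seriesTerm n| ≤ 1 / ((n : ℝ) + 1) ^ 3 := by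
  have hC : (1 : ℝ) ≤ Nat.choose (2 * (n + 1)) (n + 1) := by
    exact_mod_cast Nat.choose_pos (by omega)
  rw [seriesTerm, abs_div, abs_pow, abs_neg, abs_one, one_pow, abs_of_pos (by positivity)]
  exact one_div_le_one_div_of_le (by positivity) (le_mul_of_one_le_left (by positivity) hC)

theorem summable_seriesTerm : Summable seriesTerm :=
  .of_norm_bounded
    ((summable_nat_add_iff 1).mpr (Real.summable_one_div_nat_pow.mpr (by norm_num : 1 < 3)))
    fun n ↦ by simpa using abs_seriesTerm_le n

theorem hasSum_doubleTerm_right (i : ℕ) :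
    HasSum (fun j ↦ doubleTerm i j) (seriesTerm i / 2) := by
  have h := (hasSum_factorial_div_factorial_add (2 * i + 1)).mul_left ((-1) ^ i * (i ! : ℝ) ^ 2)
  have hterm : (fun j ↦ doubleTerm i j) =
      fun j ↦ (-1) ^ i * (i ! : ℝ) ^ 2 * ((j ! : ℝ) / (j + (2 * i + 1) + 2)!) := by
    funext j
    rw [doubleTerm, show j + (2 * i + 1) + 2 = j + 2 * i + 3 by ring]
    ring
  have hval : seriesTerm i / 2 =
      (-1) ^ i * (i ! : ℝ) ^ 2 * (1 / ((((2 * i + 1 : ℕ) : ℝ) + 1) * (2 * i + 1 + 1)!)) := by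
    rw [seriesTerm_eq_factorial]
    push_cast
    field_simp
    ring
  rwa [hterm, hval]

theorem abs_doubleTerm (i j : ℕ) : |doubleTerm i j| = (-1) ^ i * doubleTerm i j := by
  have hy : 0 ≤ (i ! : ℝ) ^ 2 * j ! / (j + 2 * i + 3)! := by positivity
  rw [doubleTerm, mul_div_assoc, abs_mul, abs_of_nonneg hy, ← mul_assoc, ← mul_pow]
  simp

theorem hasSum_abs_doubleTerm_right (i : ℕ) :
    HasSum (fun j ↦ |doubleTerm i j|) ((-1) ^ i * (seriesTerm i / 2)) := by
  simpa only [abs_doubleTerm] using (hasSum_doubleTerm_right i).mul_left ((-1) ^ i)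

theorem summable_doubleTerm : Summable (fun p : ℕ × ℕ ↦ doubleTerm p.1 p.2) := by
  refine .of_abs ((summable_prod_of_nonneg fun _ ↦ abs_nonneg _).mpr
    ⟨fun i ↦ (hasSum_abs_doubleTerm_right i).summable, ?_⟩)
  simp only [(hasSum_abs_doubleTerm_right _).tsum_eq]
  refine .of_norm_bounded (summable_seriesTerm.norm.div_const 2) fun i ↦ ?_
  simp

theorem hasSum_doubleTerm :
    HasSum (fun p : ℕ × ℕ ↦ doubleTerm p.1 p.2) ((∑' n, seriesTerm n) / 2) := by
  obtain ⟨a, ha⟩ := summable_doubleTerm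
  rwa [← tsum_div_const, (ha.prod_fiberwise hasSum_doubleTerm_right).tsum_eq]
theorem doubleTerm_wz (i j : ℕ) :
    ((i + j + 2 : ℕ) : ℝ) ^ 3 * doubleTerm i j =
      certificate (i + j + 1) i - certificate (i + j + 1) (i + 1) := by
  rw [doubleTerm, certificate, certificate, show i + j + 1 - i = j + 1 by omega,
    show i + j + 1 - (i + 1) = j by omega, show i + j + 1 + i + 1 = j + 2 * i + 2 by ring,
    show i + j + 1 + (i + 1) + 1 = j + 2 * i + 3 by ring, Nat.factorial_succ j,
    Nat.factorial_succ i, Nat.factorial_succ (j + 2 * i + 2)]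
  push_cast
  field_simp
  ring

theorem certificate_zero (N : ℕ) : certificate N 0 = 1 := by
  rw [certificate, Nat.sub_zero, Nat.add_zero, Nat.factorial_succ]
  push_cast
  field_simp
  ring

theorem certificate_self (N : ℕ) : certificate N N = 2 * ((N : ℝ) + 1) ^ 3 * seriesTerm N := by
  rw [certificate, seriesTerm_eq_factorial, Nat.sub_self, show N + N + 1 = 2 * N + 1 by ring,
    Nat.factorial_succ (2 * N + 1)]
  push_cast
  field_simp
  ring

theorem one_div_cube_eq_sum_antidiagonal (n : ℕ) :
    1 / ((n : ℝ) + 2) ^ 3 =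
      ∑ p ∈ antidiagonal n, doubleTerm p.1 p.2 + 2 * seriesTerm (n + 1) := by
  have htel : ((n : ℝ) + 2) ^ 3 * ∑ p ∈ antidiagonal n, doubleTerm p.1 p.2 =
      certificate (n + 1) 0 - certificate (n + 1) (n + 1) := by
    rw [Nat.sum_antidiagonal_eq_sum_range_succ_mk, mul_sum, ← sum_range_sub']
    refine sum_congr rfl fun k hk ↦ ?_
    have hkn : k + (n - k) = n := by have := mem_range.mp hk; omega
    have h := doubleTerm_wz k (n - k)
    rw [hkn] at h
    rw [← h]
    push_cast
    rfl
  rw [certificate_zero, certificate_self] at htel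
  push_cast at htel
  rw [div_eq_iff (by positivity)]
  linear_combination -htel

end Apery

open Apery in
/-- Apéry's series (case s=1):
ζ(3) = (5/2) · Σ_{n=1}^{∞} (-1)^{n-1} / (binom(2n, n) · n³),
where ζ(3) = Σ_{n=1}^{∞} 1/n³. -/
theorem apery_series_zeta3 :
    (∑' n : ℕ, (1 : ℝ) / ((n : ℝ) + 1) ^ 3) =
      (5 / 2) * ∑' n : ℕ,
        (-1 : ℝ) ^ n /
          ((Nat.choose (2 * (n + 1)) (n + 1) : ℝ) * ((n : ℝ) + 1) ^ 3) := by
  change _ = 5 / 2 * ∑' n, seriesTerm n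
  set T := ∑' n, seriesTerm n
  have htail : HasSum (fun n ↦ seriesTerm (n + 1)) (T - seriesTerm 0) := by
    simpa using (hasSum_nat_add_iff' 1).mpr summable_seriesTerm.hasSum
  have hterm : (fun n : ℕ ↦ 1 / (((n + 1 : ℕ) : ℝ) + 1) ^ 3) =
      fun n ↦ ∑ p ∈ antidiagonal n, doubleTerm p.1 p.2 + 2 * seriesTerm (n + 1) := by
    funext n
    rw [← one_div_cube_eq_sum_antidiagonal]
    push_cast
    ring
  have hval :
      5 / 2 * T - ∑ i ∈ range 1, 1 / ((i : ℝ) + 1) ^ 3 = T / 2 + 2 * (T - seriesTerm 0) := by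
    norm_num [seriesTerm]
    ring
  have hzeta : HasSum (fun n : ℕ ↦ 1 / ((n : ℝ) + 1) ^ 3) (5 / 2 * T) := by
    rw [← hasSum_nat_add_iff' 1, hterm, hval]
    exact hasSum_doubleTerm.sum_antidiagonal.add (htail.mul_left 2)
  exact hzeta.tsum_eq
end

section
/- Define F, G : ℕ × ℕ → ℝ by F(n, k) = (-1)^k · (k!)² · (n-k-1)! / ((n+k+1)! · (k+1)) and G(n, k) = 2 · (-1)^k · (k!)² · (n-k)! / ((n+k+1)! · (n+1)²), where the factorials are natural-number factorials. Then for all n, k ∈ ℕ with k < n, the WZ relation holds: F(n+1, k) - F(n, k) = G(n, k+1) - G(n, k). -/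
/-- The s=1 WZ pair: with
F(n,k) = (-1)^k (k!)² (n-k-1)! / ((n+k+1)! (k+1)) and
G(n,k) = 2 (-1)^k (k!)² (n-k)! / ((n+k+1)! (n+1)²),
the WZ relation holds for all k < n. -/
theorem wz_pair_s1 (F G : ℕ → ℕ → ℝ)
    (hF : ∀ n k : ℕ, F n k =
      (-1 : ℝ) ^ k * ((k.factorial : ℝ)) ^ 2 * ((n - k - 1).factorial : ℝ) /
        (((n + k + 1).factorial : ℝ) * ((k : ℝ) + 1)))
    (hG : ∀ n k : ℕ, G n k =
      2 * (-1 : ℝ) ^ k * ((k.factorial : ℝ)) ^ 2 * ((n - k).factorial : ℝ) /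
        (((n + k + 1).factorial : ℝ) * ((n : ℝ) + 1) ^ 2)) :
    ∀ n k : ℕ, k < n → F (n + 1) k - F n k = G n (k + 1) - G n k := by
  intro n k hk
  obtain ⟨d, rfl⟩ : ∃ d, n = k + 1 + d := ⟨n - (k + 1), by omega⟩
  rw [hF, hF, hG, hG]
  have e1 : k + 1 + d - k - 1 = d := by omega
  have e2 : k + 1 + d + 1 - k - 1 = d + 1 := by omega
  have e3 : k + 1 + d - (k + 1) = d := by omega
  have e4 : k + 1 + d - k = d + 1 := by omega
  have e5 : k + 1 + d + 1 + k + 1 = (k + 1 + d + k + 1) + 1 := by ring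
  have e6 : k + 1 + d + (k + 1) + 1 = (k + 1 + d + k + 1) + 1 := by ring
  rw [e1, e2, e3, e4, e5, e6, Nat.factorial_succ (k + 1 + d + k + 1),
    Nat.factorial_succ d, Nat.factorial_succ k]
  have hA : ((k.factorial : ℝ)) ≠ 0 := Nat.cast_ne_zero.mpr k.factorial_ne_zero
  have hB : ((d.factorial : ℝ)) ≠ 0 := Nat.cast_ne_zero.mpr d.factorial_ne_zero
  have hC : (((k + 1 + d + k + 1).factorial : ℝ)) ≠ 0 :=
    Nat.cast_ne_zero.mpr (k + 1 + d + k + 1).factorial_ne_zero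
  push_cast
  have hk1 : ((k : ℝ) + 1) ≠ 0 := by positivity
  have hn1 : ((k : ℝ) + 1 + d + 1) ≠ 0 := by positivity
  have hs : ((k : ℝ) + 1 + d + (k : ℝ) + 1 + 1) ≠ 0 := by positivity
  field_simp
  ring
end

section
/- Define F, G : ℕ × ℕ → ℝ by F(n, k) = (-1)^k · (k!)² · (2n-k-1)! / ((2n+k+1)! · (k+1)) and G(n, k) = (-1)^k · (k!)² · (2n-k)! · (4n+3) · (4n² + 6n + k + 3) / (2 · (2n+k+2)! · (n+1)² · (2n+1)²), where the factorials are natural-number factorials. Then for all n, k ∈ ℕ with k < 2n, the WZ relation holds: F(n+1, k) - F(n, k) = G(n, k+1) - G(n, k). -/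
/-!
Each of the four terms of the relation is `F(n, k)` times a rational function of `n` and `k`:
the factorials involved differ from those of `F(n, k)` by shifts of one or two, and `k < 2n`
guarantees that `2n - k - 1` does not truncate. Dividing by `F(n, k)` leaves an identity
between rational functions.
-/

noncomputable def wzF (n k : ℕ) : ℝ :=
  (-1 : ℝ) ^ k * ((k.factorial : ℝ)) ^ 2 * ((2 * n - k - 1).factorial : ℝ) /
    (((2 * n + k + 1).factorial : ℝ) * ((k : ℝ) + 1))

noncomputable def wzG (n k : ℕ) : ℝ :=
  (-1 : ℝ) ^ k * ((k.factorial : ℝ)) ^ 2 * ((2 * n - k).factorial : ℝ) *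
      (4 * (n : ℝ) + 3) * (4 * (n : ℝ) ^ 2 + 6 * (n : ℝ) + (k : ℝ) + 3) /
    (2 * ((2 * n + k + 2).factorial : ℝ) * ((n : ℝ) + 1) ^ 2 * (2 * (n : ℝ) + 1) ^ 2)

theorem wz_ratio_identity {K : Type*} [Field K] [CharZero K] (m x : K)
    (h₁ : 2 * m + x + 2 ≠ 0) (h₂ : 2 * m + x + 3 ≠ 0) (h₃ : m + 1 ≠ 0) (h₄ : 2 * m + 1 ≠ 0) :
    (2 * m - x) * (2 * m - x + 1) / ((2 * m + x + 2) * (2 * m + x + 3)) - 1 =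
      -((x + 1) ^ 3 * (4 * m + 3) * (4 * m ^ 2 + 6 * m + x + 4) /
          (2 * (2 * m + x + 2) * (2 * m + x + 3) * (m + 1) ^ 2 * (2 * m + 1) ^ 2)) -
        (2 * m - x) * (x + 1) * (4 * m + 3) * (4 * m ^ 2 + 6 * m + x + 3) /
          (2 * (2 * m + x + 2) * (m + 1) ^ 2 * (2 * m + 1) ^ 2) := by
  field_simp
  ring

section

variable {n k : ℕ}

theorem cast_two_mul_sub_sub_one {R : Type*} [CommRing R] (hk : k < 2 * n) :
    ((2 * n - k - 1 : ℕ) : R) = 2 * n - k - 1 := by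
  rw [Nat.cast_sub (by omega), Nat.cast_sub hk.le]
  push_cast
  ring

theorem wzF_succ_left (hk : k < 2 * n) :
    wzF (n + 1) k = wzF n k * ((2 * n - k) * (2 * n - k + 1) /
      ((2 * n + k + 2) * (2 * n + k + 3))) := by
  rw [wzF, wzF, show 2 * (n + 1) - k - 1 = (2 * n - k - 1) + 1 + 1 by omega,
    show 2 * (n + 1) + k + 1 = (2 * n + k + 1) + 1 + 1 by omega]
  push_cast [Nat.factorial_succ, cast_two_mul_sub_sub_one hk]
  field_simp
  ring

theorem wzG_eq_wzF_mul (hk : k < 2 * n) :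
    wzG n k = wzF n k * ((2 * n - k) * (k + 1) * (4 * n + 3) * (4 * n ^ 2 + 6 * n + k + 3) /
      (2 * (2 * n + k + 2) * (n + 1) ^ 2 * (2 * n + 1) ^ 2)) := by
  rw [wzG, wzF, show 2 * n - k = (2 * n - k - 1) + 1 by omega,
    show 2 * n + k + 2 = (2 * n + k + 1) + 1 by omega]
  push_cast [Nat.factorial_succ, cast_two_mul_sub_sub_one hk]
  field_simp
  ring

theorem wzG_succ_right_eq_wzF_mul :
    wzG n (k + 1) = wzF n k * -((k + 1) ^ 3 * (4 * n + 3) * (4 * n ^ 2 + 6 * n + k + 4) /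
      (2 * (2 * n + k + 2) * (2 * n + k + 3) * (n + 1) ^ 2 * (2 * n + 1) ^ 2)) := by
  rw [wzG, wzF, show 2 * n - (k + 1) = 2 * n - k - 1 by omega,
    show 2 * n + (k + 1) + 2 = (2 * n + k + 1) + 1 + 1 by omega]
  push_cast [Nat.factorial_succ]
  field_simp
  ring

end

/-- The s=2 WZ pair: with
F(n,k) = (-1)^k (k!)² (2n-k-1)! / ((2n+k+1)! (k+1)) and
G(n,k) = (-1)^k (k!)² (2n-k)! (4n+3)(4n²+6n+k+3) / (2 (2n+k+2)! (n+1)² (2n+1)²),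
the WZ relation holds for all k < 2n. -/
theorem wz_pair_s2 (F G : ℕ → ℕ → ℝ)
    (hF : ∀ n k : ℕ, F n k =
      (-1 : ℝ) ^ k * ((k.factorial : ℝ)) ^ 2 * ((2 * n - k - 1).factorial : ℝ) /
        (((2 * n + k + 1).factorial : ℝ) * ((k : ℝ) + 1)))
    (hG : ∀ n k : ℕ, G n k =
      (-1 : ℝ) ^ k * ((k.factorial : ℝ)) ^ 2 * ((2 * n - k).factorial : ℝ) *
          (4 * (n : ℝ) + 3) * (4 * (n : ℝ) ^ 2 + 6 * (n : ℝ) + (k : ℝ) + 3) /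
        (2 * ((2 * n + k + 2).factorial : ℝ) * ((n : ℝ) + 1) ^ 2 *
          (2 * (n : ℝ) + 1) ^ 2)) :
    ∀ n k : ℕ, k < 2 * n → F (n + 1) k - F n k = G n (k + 1) - G n k := by
  obtain rfl : F = wzF := funext₂ hF
  obtain rfl : G = wzG := funext₂ hG
  intro n k hk
  rw [wzF_succ_left hk, wzG_succ_right_eq_wzF_mul, wzG_eq_wzF_mul hk]
  have ratio := wz_ratio_identity (n : ℝ) (k : ℝ)
    (by positivity) (by positivity) (by positivity) (by positivity)
  linear_combination wzF n k * ratio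
end

section
/- Σ_{n=0}^{∞} (4n+3)(4n² + 6n + 3) / (4 · (n+1)³ · (2n+1)³) = 2 · ζ(3). -/
/-- Σ_{n=0}^{∞} (4n+3)(4n²+6n+3) / (4(n+1)³(2n+1)³) = 2 ζ(3),
where ζ(3) = Σ_{n=1}^{∞} 1/n³. -/
theorem sum_G_s2_eq_two_zeta3 :
    (∑' n : ℕ,
        (4 * (n : ℝ) + 3) * (4 * (n : ℝ) ^ 2 + 6 * (n : ℝ) + 3) /
          (4 * ((n : ℝ) + 1) ^ 3 * (2 * (n : ℝ) + 1) ^ 3)) =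
      2 * ∑' n : ℕ, (1 : ℝ) / ((n : ℝ) + 1) ^ 3 := by
  set f : ℕ → ℝ := fun n => (1 : ℝ) / ((n : ℝ) + 1) ^ 3 with hfdef
  have hf : Summable f := by
    have h1 : Summable (fun n : ℕ => (1 : ℝ) / (n : ℝ) ^ 3) :=
      Real.summable_one_div_nat_pow.mpr (by norm_num)
    have h2 := (summable_nat_add_iff 1).mpr h1
    refine h2.congr fun n => ?_
    simp [hfdef]
  have hOddeq : ∀ k : ℕ, f (2 * k + 1) = (1 / 8 : ℝ) * f k := by
    intro k
    simp only [hfdef]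
    push_cast
    field_simp
    ring
  have hOdd : Summable (fun k => f (2 * k + 1)) := by
    simp only [hOddeq]
    exact hf.mul_left _
  have hEven : Summable (fun k => f (2 * k)) := by
    refine Summable.of_nonneg_of_le (fun k => ?_) (fun k => ?_) hf
    · positivity
    · simp only [hfdef]
      apply div_le_div_of_nonneg_left (by norm_num) (by positivity)
      push_cast
      gcongr; nlinarith [Nat.cast_nonneg (α := ℝ) k]
  have hsplit := tsum_even_add_odd hEven hOdd
  have hOddsum : ∑' k, f (2 * k + 1) = (1 / 8 : ℝ) * ∑' k, f k := by
    simp only [hOddeq]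
    exact tsum_mul_left
  have hEvensum : ∑' k, f (2 * k) = (7 / 8 : ℝ) * ∑' k, f k := by
    rw [hOddsum] at hsplit; linarith
  have hdecomp : ∀ n : ℕ,
      (4 * (n : ℝ) + 3) * (4 * (n : ℝ) ^ 2 + 6 * (n : ℝ) + 3) /
          (4 * ((n : ℝ) + 1) ^ 3 * (2 * (n : ℝ) + 1) ^ 3) =
      (1 / 4 : ℝ) * f n + 2 * f (2 * n) := by
    intro n
    have h1 : ((n : ℝ) + 1) ≠ 0 := by positivity
    have h2 : (2 * (n : ℝ) + 1) ≠ 0 := by positivity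
    simp only [hfdef]
    push_cast
    field_simp
    ring
  calc (∑' n : ℕ,
        (4 * (n : ℝ) + 3) * (4 * (n : ℝ) ^ 2 + 6 * (n : ℝ) + 3) /
          (4 * ((n : ℝ) + 1) ^ 3 * (2 * (n : ℝ) + 1) ^ 3))
      = ∑' n : ℕ, ((1 / 4 : ℝ) * f n + 2 * f (2 * n)) := by
        exact tsum_congr hdecomp
    _ = (1 / 4 : ℝ) * (∑' n, f n) + 2 * ∑' n, f (2 * n) := by
        rw [Summable.tsum_add (hf.mul_left _) (hEven.mul_left _), tsum_mul_left, tsum_mul_left]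
    _ = 2 * ∑' n : ℕ, f n := by rw [hEvensum]; ring
end

section
/- Define F, G : ℕ × ℕ → ℝ by F(n, k) = (-1)^k · (k!)² · (n-k-1)! / ((n+k+1)! · (k+1)) and G(n, k) = 2 · (-1)^k · (k!)² · (n-k)! / ((n+k+1)! · (n+1)²). Then for every n ≥ 1, F(n, n-1) + G(n-1, n-1) = 5 · (-1)^{n-1} / (binom(2n, n) · n³). -/
/-- Diagonal evaluation for the s=1 WZ pair:
F(n,n-1) + G(n-1,n-1) = 5 (-1)^{n-1} / (binom(2n,n) n³) for n ≥ 1. -/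
theorem diagonal_s1 (F G : ℕ → ℕ → ℝ)
    (hF : ∀ n k : ℕ, F n k =
      (-1 : ℝ) ^ k * ((k.factorial : ℝ)) ^ 2 * ((n - k - 1).factorial : ℝ) /
        (((n + k + 1).factorial : ℝ) * ((k : ℝ) + 1)))
    (hG : ∀ n k : ℕ, G n k =
      2 * (-1 : ℝ) ^ k * ((k.factorial : ℝ)) ^ 2 * ((n - k).factorial : ℝ) /
        (((n + k + 1).factorial : ℝ) * ((n : ℝ) + 1) ^ 2)) :
    ∀ n : ℕ, 1 ≤ n →
      F n (n - 1) + G (n - 1) (n - 1) =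
        5 * (-1 : ℝ) ^ (n - 1) / ((Nat.choose (2 * n) n : ℝ) * (n : ℝ) ^ 3) := by
  intro n hn
  obtain ⟨m, rfl⟩ := Nat.exists_eq_add_of_le hn
  rw [hF, hG]
  have h1 : 1 + m - 1 = m := by omega
  have h2 : 1 + m - m - 1 = 0 := by omega
  have h3 : 1 + m + m + 1 = 2 * m + 2 := by omega
  have h4 : m - m = 0 := by omega
  have h5 : m + m + 1 = 2 * m + 1 := by omega
  rw [h1, h2, h3, h4, h5]
  have hch : (Nat.choose (2 * (1 + m)) (1 + m) : ℝ) =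
      ((2 * m + 2).factorial : ℝ) / (((1 + m).factorial : ℝ) * ((1 + m).factorial : ℝ)) := by
    rw [eq_div_iff (by positivity)]
    have := Nat.choose_mul_factorial_mul_factorial (Nat.le_mul_of_pos_left (1 + m) (by norm_num) : (1 + m) ≤ 2 * (1 + m))
    have h6 : 2 * (1 + m) - (1 + m) = 1 + m := by omega
    rw [h6] at this
    have h7 : 2 * (1 + m) = 2 * m + 2 := by omega
    rw [h7] at this
    push_cast [← this]
    ring
  rw [hch]
  have e1 : ((2 * m + 2).factorial : ℝ) = (2 * m + 2) * ((2 * m + 1).factorial : ℝ) := by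
    rw [show 2 * m + 2 = (2 * m + 1) + 1 from rfl, Nat.factorial_succ]; push_cast; ring
  have e2 : ((1 + m).factorial : ℝ) = (m + 1) * (m.factorial : ℝ) := by
    rw [show 1 + m = m + 1 from by omega, Nat.factorial_succ]; push_cast; ring
  have hm : (m.factorial : ℝ) ≠ 0 := by positivity
  have h21 : ((2 * m + 1).factorial : ℝ) ≠ 0 := by positivity
  have hm1 : (m : ℝ) + 1 ≠ 0 := by positivity
  rw [e1, e2]
  push_cast
  rw [Nat.factorial_zero]
  field_simp
  ring
end

section
/- Define F, G : ℕ × ℕ → ℝ by F(n, k) = (-1)^k · (k!)² · (2n-k-1)! / ((2n+k+1)! · (k+1)) and G(n, k) = (-1)^k · (k!)² · (2n-k)! · (4n+3) · (4n² + 6n + k + 3) / (2 · (2n+k+2)! · (n+1)² · (2n+1)²). Then for every n ≥ 1, F(n, n-1) + G(n-1, n-1) = (-1)^{n-1} · (56n² - 32n + 5) / (2 · (2n-1)² · binom(3n, n) · binom(2n, n) · n³). -/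
/-- Diagonal evaluation for the s=2 WZ pair:
F(n,n-1) + G(n-1,n-1)
  = (-1)^{n-1} (56n²-32n+5) / (2 (2n-1)² binom(3n,n) binom(2n,n) n³) for n ≥ 1. -/
theorem diagonal_s2 (F G : ℕ → ℕ → ℝ)
    (hF : ∀ n k : ℕ, F n k =
      (-1 : ℝ) ^ k * ((k.factorial : ℝ)) ^ 2 * ((2 * n - k - 1).factorial : ℝ) /
        (((2 * n + k + 1).factorial : ℝ) * ((k : ℝ) + 1)))
    (hG : ∀ n k : ℕ, G n k =
      (-1 : ℝ) ^ k * ((k.factorial : ℝ)) ^ 2 * ((2 * n - k).factorial : ℝ) *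
          (4 * (n : ℝ) + 3) * (4 * (n : ℝ) ^ 2 + 6 * (n : ℝ) + (k : ℝ) + 3) /
        (2 * ((2 * n + k + 2).factorial : ℝ) * ((n : ℝ) + 1) ^ 2 *
          (2 * (n : ℝ) + 1) ^ 2)) :
    ∀ n : ℕ, 1 ≤ n →
      F n (n - 1) + G (n - 1) (n - 1) =
        (-1 : ℝ) ^ (n - 1) * (56 * (n : ℝ) ^ 2 - 32 * (n : ℝ) + 5) /
          (2 * (2 * (n : ℝ) - 1) ^ 2 * (Nat.choose (3 * n) n : ℝ) *
            (Nat.choose (2 * n) n : ℝ) * (n : ℝ) ^ 3) := by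
  rintro n hn
  obtain ⟨m, rfl⟩ : ∃ m, n = m + 1 := ⟨n - 1, (Nat.succ_pred_eq_of_pos hn).symm⟩
  rw [hF, hG]
  have e0 : m + 1 - 1 = m := rfl
  have e1 : 2 * (m + 1) - m - 1 = m + 1 := by omega
  have e2 : 2 * (m + 1) + m + 1 = 3 * m + 3 := by omega
  have e3 : 2 * m - m = m := by omega
  have e4 : 2 * m + m + 2 = 3 * m + 2 := by omega
  have e5 : 3 * (m + 1) = 3 * m + 3 := by ring
  simp only [e0, e1, e2, e3, e4, e5]
  have c1 : ((3 * m + 3).choose (m + 1) : ℝ) =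
      (3 * m + 3).factorial / ((m + 1).factorial * (2 * (m + 1)).factorial) := by
    rw [Nat.cast_choose ℝ (by omega), show 3 * m + 3 - (m + 1) = 2 * (m + 1) by omega]
  have c2 : ((2 * (m + 1)).choose (m + 1) : ℝ) =
      (2 * (m + 1)).factorial / ((m + 1).factorial * (m + 1).factorial) := by
    rw [Nat.cast_choose ℝ (by omega), show 2 * (m + 1) - (m + 1) = m + 1 by omega]
  rw [c1, c2]
  have f1 : ((3 * m + 3).factorial : ℝ) = (3 * (m : ℝ) + 3) * ((3 * m + 2).factorial : ℝ) := by
    rw [show 3 * m + 3 = (3 * m + 2) + 1 by ring, Nat.factorial_succ]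
    push_cast; ring
  have f2 : (((m + 1).factorial : ℝ)) = ((m : ℝ) + 1) * (m.factorial : ℝ) := by
    rw [Nat.factorial_succ]; push_cast; ring
  rw [f1, f2]
  have hm : (0 : ℝ) < (m.factorial : ℝ) := by positivity
  have h2 : (0 : ℝ) < ((3 * m + 2).factorial : ℝ) := by positivity
  have h3 : (0 : ℝ) < ((2 * (m + 1)).factorial : ℝ) := by positivity
  have h4 : (0 : ℝ) < (m : ℝ) + 1 := by positivity
  have h5 : (2 * ((m : ℝ) + 1) - 1) = 2 * (m : ℝ) + 1 := by ring
  push_cast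
  rw [h5]
  have h6 : (0 : ℝ) < 2 * (m : ℝ) + 1 := by positivity
  field_simp
  ring
end
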